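/- arXiv:2510.23450 — 2 statements merged into one kernel-verified Lean document; each statement's English description precedes it below -/
import Mathlib

section
/- Let M ∈ L(ℂ^d) satisfy Re(Mξ,ξ) ≥ m|ξ|² for all ξ with m > 0, and suppose N(M) ⊆ Σ_ω for some ω ∈ [0,π/2). Let p ≥ 2 with m − σ_p‖Im M‖ > 0, where σ_p = (p−2)/(2√(p−1)) and Im M = (M−M*)/(2i) viewed as acting on ℝ^d. Then N_p(M) ⊆ Σ_{α_p} where tan(α_p) = (tan(ω)·m + σ_p‖Re M‖)/(m − σ_p‖Im M‖). -/
/-! Write `ξ = α + iβ` with `α, β` real, `A = Re M`, `B = Im M`. Since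
`J_p ξ = (2/p) ξ + 2(1 - 2/p) α`, we have `½⟪J_p ξ, Mξ⟫ = (1/p)⟪ξ, Mξ⟫ + (1 - 2/p)⟪α, Mξ⟫`,
where `⟪α, Mξ⟫` has real part `⟪α, Aα⟫ - ⟪α, Bβ⟫` and imaginary part `⟪α, Bα⟫ + ⟪α, Aβ⟫`.
Coercivity and `N(M) ⊆ Σ_ω` (which extends from unit vectors to all vectors, `Σ_ω` being a
cone, and applies to the real vector `α`) control `⟪ξ, Mξ⟫`, `⟪α, Aα⟫` and `⟪α, Bα⟫`. The cross
terms are at most `‖B‖|α||β|` and `‖A‖|α||β|`, and Young's inequality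
`(1 - 2/p)|α||β| ≤ σ_p W`, `W = |α|²/p' + |β|²/p`, absorbs them:
`Re ≥ (m - σ_p‖B‖) W > 0` and `|Im| ≤ tan ω · Re + σ_p (‖A‖ + tan ω ‖B‖) W`. By the choice of
`α_p` the last term is `(tan α_p - tan ω)(m - σ_p‖B‖) W ≤ (tan α_p - tan ω) Re`. -/

noncomputable section

open Complex

/-- The closed sector of half-angle `θ` in the complex plane. -/
def sector (θ : ℝ) : Set ℂ := {z : ℂ | |z.arg| ≤ θ} ∪ {0}

/-- The ℝ-linear map `J_p(α + iβ) = 2α/p' + i·2β/p`, acting coordinatewise. -/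
def Jp {d : ℕ} (p : ℝ) (ξ : EuclideanSpace ℂ (Fin d)) : EuclideanSpace ℂ (Fin d) :=
  (WithLp.equiv 2 (Fin d → ℂ)).symm fun i =>
    ((2 / (p / (p - 1)) * (ξ i).re : ℝ) : ℂ) + Complex.I * ((2 / p * (ξ i).im : ℝ) : ℂ)

/-- `σ_p = (p−2)/(2√(p−1))`. -/
def sigmaP (p : ℝ) : ℝ := (p - 2) / (2 * Real.sqrt (p - 1))

theorem abs_arg_le_iff_abs_im_le {z : ℂ} (hz : 0 < z.re) {θ : ℝ} (hθ₀ : -(Real.pi / 2) < θ)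
    (hθ : θ < Real.pi / 2) : |z.arg| ≤ θ ↔ |z.im| ≤ Real.tan θ * z.re := by
  have harg : z.arg = Real.arctan (z.im / z.re) := by
    rw [← Complex.tan_arg, Real.arctan_tan (Complex.neg_pi_div_two_lt_arg_iff.2 (.inl hz))
      (Complex.arg_lt_pi_div_two_iff.2 (.inl hz))]
  rw [harg, abs_le, abs_le, ← div_le_iff₀ hz, ← neg_mul, ← le_div_iff₀ hz,
    ← Real.arctan_le_arctan_iff (x := -Real.tan θ), ← Real.arctan_le_arctan_iff (y := Real.tan θ),
    Real.arctan_neg, Real.arctan_tan hθ₀ hθ]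

theorem abs_im_le_tan_mul_re_of_mem_sector {θ : ℝ} (hθ : θ < Real.pi / 2) {z : ℂ}
    (hz : z ∈ sector θ) : |z.im| ≤ Real.tan θ * z.re := by
  rcases eq_or_ne z 0 with rfl | hz0
  · simp
  have harg : |z.arg| ≤ θ := hz.resolve_right hz0
  have hre : 0 < z.re :=
    (Complex.abs_arg_lt_pi_div_two_iff.1 (harg.trans_lt hθ)).resolve_right hz0
  exact (abs_arg_le_iff_abs_im_le hre (by linarith [abs_nonneg z.arg]) hθ).1 harg

theorem mem_sector_of_abs_im_le {θ : ℝ} (hθ₀ : 0 ≤ θ) (hθ : θ < Real.pi / 2) {z : ℂ}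
    (hz : 0 < z.re) (h : |z.im| ≤ Real.tan θ * z.re) : z ∈ sector θ :=
  .inl ((abs_arg_le_iff_abs_im_le hz (by linarith [Real.pi_pos]) hθ).2 h)

theorem ofReal_mul_mem_sector {θ r : ℝ} (hr : 0 < r) {z : ℂ} (hz : z ∈ sector θ) :
    (r : ℂ) * z ∈ sector θ := by
  rcases hz with hz | rfl
  · exact .inl (by rwa [Set.mem_ofPred_eq, Complex.arg_real_mul _ hr])
  · simp [sector]

theorem inner_map_self_mem_sector {E : Type*} [NormedAddCommGroup E] [InnerProductSpace ℂ E]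
    (T : E →ₗ[ℂ] E) {θ : ℝ} (hT : ∀ u : E, ‖u‖ = 1 → inner ℂ u (T u) ∈ sector θ) (x : E) :
    inner ℂ x (T x) ∈ sector θ := by
  rcases eq_or_ne x 0 with rfl | hx
  · simp [sector]
  have hx' : 0 < ‖x‖ := norm_pos_iff.2 hx
  set u := ((‖x‖⁻¹ : ℝ) : ℂ) • x
  have hu : ‖u‖ = 1 := by simp [u, norm_smul, hx'.ne']
  have hxu : x = ((‖x‖ : ℝ) : ℂ) • u := by simp [u, smul_smul, hx'.ne']
  have : inner ℂ x (T x) = ((‖x‖ ^ 2 : ℝ) : ℂ) * inner ℂ u (T u) := by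
    conv_lhs => rw [hxu]
    rw [map_smul, inner_smul_left, inner_smul_right, Complex.conj_ofReal]
    push_cast
    ring
  rw [this]
  exact ofReal_mul_mem_sector (by positivity) (hT u hu)

section RealImaginaryParts

variable {ι : Type*}

def reVec (ξ : EuclideanSpace ℂ ι) : EuclideanSpace ℝ ι := WithLp.toLp 2 fun i => (ξ i).re

def imVec (ξ : EuclideanSpace ℂ ι) : EuclideanSpace ℝ ι := WithLp.toLp 2 fun i => (ξ i).im

def ofRealVec (x : EuclideanSpace ℝ ι) : EuclideanSpace ℂ ι := WithLp.toLp 2 fun i => (x i : ℂ)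

@[simp] theorem reVec_apply (ξ : EuclideanSpace ℂ ι) (i : ι) : reVec ξ i = (ξ i).re := rfl

@[simp] theorem imVec_apply (ξ : EuclideanSpace ℂ ι) (i : ι) : imVec ξ i = (ξ i).im := rfl

@[simp] theorem ofRealVec_apply (x : EuclideanSpace ℝ ι) (i : ι) : ofRealVec x i = x i := rfl

@[simp] theorem reVec_ofRealVec (x : EuclideanSpace ℝ ι) : reVec (ofRealVec x) = x := by
  ext i; simp

@[simp] theorem imVec_ofRealVec (x : EuclideanSpace ℝ ι) : imVec (ofRealVec x) = 0 := by
  ext i; simp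

theorem norm_ofRealVec [Fintype ι] (x : EuclideanSpace ℝ ι) : ‖ofRealVec x‖ = ‖x‖ := by
  simp [EuclideanSpace.norm_eq]

theorem norm_sq_eq_norm_reVec_sq_add_norm_imVec_sq [Fintype ι] (ξ : EuclideanSpace ℂ ι) :
    ‖ξ‖ ^ 2 = ‖reVec ξ‖ ^ 2 + ‖imVec ξ‖ ^ 2 := by
  rw [EuclideanSpace.norm_sq_eq, EuclideanSpace.real_norm_sq_eq, EuclideanSpace.real_norm_sq_eq,
    ← Finset.sum_add_distrib]
  congr with i
  rw [Complex.sq_norm, Complex.normSq_apply, reVec_apply, imVec_apply, sq, sq]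

theorem re_inner_ofRealVec_left [Fintype ι] (x : EuclideanSpace ℝ ι) (η : EuclideanSpace ℂ ι) :
    (inner ℂ (ofRealVec x) η).re = inner ℝ x (reVec η) := by
  simp [PiLp.inner_apply, Complex.re_sum, mul_comm]

theorem im_inner_ofRealVec_left [Fintype ι] (x : EuclideanSpace ℝ ι) (η : EuclideanSpace ℂ ι) :
    (inner ℂ (ofRealVec x) η).im = inner ℝ x (imVec η) := by
  simp [PiLp.inner_apply, Complex.im_sum, mul_comm]

theorem reVec_toEuclideanCLM [Fintype ι] [DecidableEq ι] (M : Matrix ι ι ℂ)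
    (ξ : EuclideanSpace ℂ ι) :
    reVec (Matrix.toEuclideanCLM (𝕜 := ℂ) M ξ) =
      Matrix.toEuclideanCLM (𝕜 := ℝ) (M.map Complex.re) (reVec ξ) -
        Matrix.toEuclideanCLM (𝕜 := ℝ) (M.map Complex.im) (imVec ξ) := by
  ext i
  simp [Matrix.mulVec, dotProduct, Complex.re_sum]

theorem imVec_toEuclideanCLM [Fintype ι] [DecidableEq ι] (M : Matrix ι ι ℂ)
    (ξ : EuclideanSpace ℂ ι) :
    imVec (Matrix.toEuclideanCLM (𝕜 := ℂ) M ξ) =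
      Matrix.toEuclideanCLM (𝕜 := ℝ) (M.map Complex.im) (reVec ξ) +
        Matrix.toEuclideanCLM (𝕜 := ℝ) (M.map Complex.re) (imVec ξ) := by
  ext i
  simp [Matrix.mulVec, dotProduct, Complex.im_sum, ← Finset.sum_add_distrib, add_comm]

end RealImaginaryParts

theorem Jp_eq {d : ℕ} {p : ℝ} (hp : p ≠ 0) (ξ : EuclideanSpace ℂ (Fin d)) :
    Jp p ξ = (2 : ℂ) • (((1 / p : ℝ) : ℂ) • ξ + ((1 - 2 / p : ℝ) : ℂ) • ofRealVec (reVec ξ)) := by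
  ext i
  apply Complex.ext
  · simp [Jp, div_div_eq_mul_div]
    field_simp
    ring
  · simp [Jp, div_div_eq_mul_div]
    field_simp

theorem inner_Jp_left {d : ℕ} {p : ℝ} (hp : p ≠ 0) (ξ y : EuclideanSpace ℂ (Fin d)) :
    inner ℂ (Jp p ξ) y =
      2 * ((1 / p : ℝ) * inner ℂ ξ y + (1 - 2 / p : ℝ) * inner ℂ (ofRealVec (reVec ξ)) y) := by
  simp only [Jp_eq hp, inner_smul_left, inner_add_left, Complex.conj_ofReal, map_ofNat]

theorem sigmaP_nonneg {p : ℝ} (hp : 2 ≤ p) : 0 ≤ sigmaP p :=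
  div_nonneg (by linarith) (by positivity)

theorem one_sub_two_div_mul_mul_le_sigmaP_mul {p : ℝ} (hp : 2 ≤ p) (r s : ℝ) :
    (1 - 2 / p) * (r * s) ≤ sigmaP p * (r ^ 2 / (p / (p - 1)) + s ^ 2 / p) := by
  set q := Real.sqrt (p - 1)
  have hq : 0 < q := Real.sqrt_pos.2 (by linarith)
  have hq2 : q ^ 2 = p - 1 := Real.sq_sqrt (by linarith)
  have hp0 : p ≠ 0 := by positivity
  have : sigmaP p * (r ^ 2 / (p / (p - 1)) + s ^ 2 / p) - (1 - 2 / p) * (r * s) =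
      (p - 2) / (2 * q * p) * (q * r - s) ^ 2 := by
    rw [sigmaP, ← hq2, Real.sqrt_sq hq.le]
    field_simp
    ring
  rw [← sub_nonneg, this]
  exact mul_nonneg (div_nonneg (by linarith) (by positivity)) (sq_nonneg _)

theorem abs_real_inner_apply_le {F : Type*} [NormedAddCommGroup F] [InnerProductSpace ℝ F]
    (T : F →L[ℝ] F) (x y : F) : |inner ℝ x (T y)| ≤ ‖T‖ * (‖x‖ * ‖y‖) :=
  calc |inner ℝ x (T y)| ≤ ‖x‖ * ‖T y‖ := abs_real_inner_le_norm _ _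
    _ ≤ ‖x‖ * (‖T‖ * ‖y‖) := by gcongr; exact T.le_opNorm y
    _ = ‖T‖ * (‖x‖ * ‖y‖) := by ring

section Matrix

variable {ι : Type*} [Fintype ι] [DecidableEq ι] (M : Matrix ι ι ℂ)

theorem re_inner_ofRealVec_toEuclideanCLM (x : EuclideanSpace ℝ ι) (ξ : EuclideanSpace ℂ ι) :
    (inner ℂ (ofRealVec x) (Matrix.toEuclideanCLM (𝕜 := ℂ) M ξ)).re =
      inner ℝ x (Matrix.toEuclideanCLM (𝕜 := ℝ) (M.map Complex.re) (reVec ξ)) -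
        inner ℝ x (Matrix.toEuclideanCLM (𝕜 := ℝ) (M.map Complex.im) (imVec ξ)) := by
  rw [re_inner_ofRealVec_left, reVec_toEuclideanCLM, inner_sub_right]

theorem im_inner_ofRealVec_toEuclideanCLM (x : EuclideanSpace ℝ ι) (ξ : EuclideanSpace ℂ ι) :
    (inner ℂ (ofRealVec x) (Matrix.toEuclideanCLM (𝕜 := ℂ) M ξ)).im =
      inner ℝ x (Matrix.toEuclideanCLM (𝕜 := ℝ) (M.map Complex.im) (reVec ξ)) +
        inner ℝ x (Matrix.toEuclideanCLM (𝕜 := ℝ) (M.map Complex.re) (imVec ξ)) := by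
  rw [im_inner_ofRealVec_left, imVec_toEuclideanCLM, inner_add_right]

theorem re_inner_ofRealVec_toEuclideanCLM_self (x : EuclideanSpace ℝ ι) :
    (inner ℂ (ofRealVec x) (Matrix.toEuclideanCLM (𝕜 := ℂ) M (ofRealVec x))).re =
      inner ℝ x (Matrix.toEuclideanCLM (𝕜 := ℝ) (M.map Complex.re) x) := by
  simp [re_inner_ofRealVec_toEuclideanCLM]

theorem im_inner_ofRealVec_toEuclideanCLM_self (x : EuclideanSpace ℝ ι) :
    (inner ℂ (ofRealVec x) (Matrix.toEuclideanCLM (𝕜 := ℂ) M (ofRealVec x))).im =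
      inner ℝ x (Matrix.toEuclideanCLM (𝕜 := ℝ) (M.map Complex.im) x) := by
  simp [im_inner_ofRealVec_toEuclideanCLM]

end Matrix

section Weight

variable {ι : Type*} [Fintype ι] {p : ℝ}

def pWeight (p : ℝ) (ξ : EuclideanSpace ℂ ι) : ℝ :=
  ‖reVec ξ‖ ^ 2 / (p / (p - 1)) + ‖imVec ξ‖ ^ 2 / p

theorem pWeight_eq (hp : p ≠ 0) (ξ : EuclideanSpace ℂ ι) :
    pWeight p ξ = 1 / p * ‖ξ‖ ^ 2 + (1 - 2 / p) * ‖reVec ξ‖ ^ 2 := by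
  rw [pWeight, norm_sq_eq_norm_reVec_sq_add_norm_imVec_sq, div_div_eq_mul_div]
  field_simp
  ring

theorem pWeight_pos (hp : 2 ≤ p) {ξ : EuclideanSpace ℂ ι} (hξ : ξ ≠ 0) : 0 < pWeight p ξ := by
  have hξ' : 0 < ‖reVec ξ‖ ^ 2 + ‖imVec ξ‖ ^ 2 := by
    rw [← norm_sq_eq_norm_reVec_sq_add_norm_imVec_sq]; positivity
  rw [pWeight, div_div_eq_mul_div, ← add_div]
  apply div_pos _ (by linarith)
  nlinarith [sq_nonneg ‖reVec ξ‖]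

end Weight

section Estimates

variable {d : ℕ} (M : Matrix (Fin d) (Fin d) ℂ) {m p : ℝ}

theorem re_inner_Jp_left (hp : p ≠ 0) (ξ : EuclideanSpace ℂ (Fin d)) :
    (inner ℂ (Jp p ξ) (Matrix.toEuclideanCLM (𝕜 := ℂ) M ξ)).re =
      2 * (1 / p * (inner ℂ ξ (Matrix.toEuclideanCLM (𝕜 := ℂ) M ξ)).re + (1 - 2 / p) *
        (inner ℝ (reVec ξ) (Matrix.toEuclideanCLM (𝕜 := ℝ) (M.map Complex.re) (reVec ξ)) -
          inner ℝ (reVec ξ) (Matrix.toEuclideanCLM (𝕜 := ℝ) (M.map Complex.im) (imVec ξ)))) := by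
  rw [inner_Jp_left hp]
  simp [Complex.mul_re, re_inner_ofRealVec_toEuclideanCLM]

theorem im_inner_Jp_left (hp : p ≠ 0) (ξ : EuclideanSpace ℂ (Fin d)) :
    (inner ℂ (Jp p ξ) (Matrix.toEuclideanCLM (𝕜 := ℂ) M ξ)).im =
      2 * (1 / p * (inner ℂ ξ (Matrix.toEuclideanCLM (𝕜 := ℂ) M ξ)).im + (1 - 2 / p) *
        (inner ℝ (reVec ξ) (Matrix.toEuclideanCLM (𝕜 := ℝ) (M.map Complex.im) (reVec ξ)) +
          inner ℝ (reVec ξ) (Matrix.toEuclideanCLM (𝕜 := ℝ) (M.map Complex.re) (imVec ξ)))) := by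
  rw [inner_Jp_left hp]
  simp [Complex.mul_im, im_inner_ofRealVec_toEuclideanCLM]

theorem le_re_inner_Jp (hp : 2 ≤ p)
    (hcoer : ∀ ξ : EuclideanSpace ℂ (Fin d),
      m * ‖ξ‖ ^ 2 ≤ (inner ℂ ξ (Matrix.toEuclideanCLM (𝕜 := ℂ) M ξ)).re)
    (ξ : EuclideanSpace ℂ (Fin d)) :
    2 * ((m - sigmaP p * ‖Matrix.toEuclideanCLM (𝕜 := ℝ) (M.map Complex.im)‖) * pWeight p ξ) ≤
      (inner ℂ (Jp p ξ) (Matrix.toEuclideanCLM (𝕜 := ℂ) M ξ)).re := by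
  set B := Matrix.toEuclideanCLM (𝕜 := ℝ) (M.map Complex.im)
  set a := reVec ξ
  have hp₀ : p ≠ 0 := by positivity
  have he : 0 ≤ 1 - 2 / p := by rw [sub_nonneg, div_le_one₀ (by positivity)]; exact hp
  have hw := mul_le_mul_of_nonneg_left (hcoer ξ) (by positivity : 0 ≤ 1 / p)
  have haa : m * ‖a‖ ^ 2 ≤ inner ℝ a (Matrix.toEuclideanCLM (𝕜 := ℝ) (M.map Complex.re) a) := by
    simpa [norm_ofRealVec, re_inner_ofRealVec_toEuclideanCLM_self] using hcoer (ofRealVec a)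
  have hab := (le_abs_self _).trans (abs_real_inner_apply_le B a (imVec ξ))
  have hY : (1 - 2 / p) * (‖a‖ * ‖imVec ξ‖) ≤ sigmaP p * pWeight p ξ :=
    one_sub_two_div_mul_mul_le_sigmaP_mul hp _ _
  rw [re_inner_Jp_left M hp₀]
  linear_combination 2 * hw + 2 * mul_le_mul_of_nonneg_left haa he +
    2 * mul_le_mul_of_nonneg_left hab he + 2 * mul_le_mul_of_nonneg_left hY (norm_nonneg B) +
    2 * m * pWeight_eq hp₀ ξ

theorem abs_im_inner_Jp_le (hp : 2 ≤ p) {t : ℝ} (ht : 0 ≤ t)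
    (hsec : ∀ η : EuclideanSpace ℂ (Fin d),
      |(inner ℂ η (Matrix.toEuclideanCLM (𝕜 := ℂ) M η)).im| ≤
        t * (inner ℂ η (Matrix.toEuclideanCLM (𝕜 := ℂ) M η)).re)
    (ξ : EuclideanSpace ℂ (Fin d)) :
    |(inner ℂ (Jp p ξ) (Matrix.toEuclideanCLM (𝕜 := ℂ) M ξ)).im| ≤
      t * (inner ℂ (Jp p ξ) (Matrix.toEuclideanCLM (𝕜 := ℂ) M ξ)).re +
        2 * (sigmaP p * (‖Matrix.toEuclideanCLM (𝕜 := ℝ) (M.map Complex.re)‖ +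
          t * ‖Matrix.toEuclideanCLM (𝕜 := ℝ) (M.map Complex.im)‖) * pWeight p ξ) := by
  set A := Matrix.toEuclideanCLM (𝕜 := ℝ) (M.map Complex.re)
  set B := Matrix.toEuclideanCLM (𝕜 := ℝ) (M.map Complex.im)
  set a := reVec ξ
  set b := imVec ξ
  have hp₀ : p ≠ 0 := by positivity
  have hc : 0 ≤ 1 / p := by positivity
  have he : 0 ≤ 1 - 2 / p := by rw [sub_nonneg, div_le_one₀ (by positivity)]; exact hp
  have htri : |(inner ℂ (Jp p ξ) (Matrix.toEuclideanCLM (𝕜 := ℂ) M ξ)).im| ≤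
      2 * (1 / p * |(inner ℂ ξ (Matrix.toEuclideanCLM (𝕜 := ℂ) M ξ)).im| +
        (1 - 2 / p) * (|inner ℝ a (B a)| + |inner ℝ a (A b)|)) := by
    rw [im_inner_Jp_left M hp₀, abs_mul, abs_two]
    gcongr
    refine (abs_add_le _ _).trans ?_
    rw [abs_mul, abs_mul, abs_of_nonneg hc, abs_of_nonneg he]
    gcongr
    exact abs_add_le _ _
  have hw := mul_le_mul_of_nonneg_left (hsec ξ) hc
  have hBa : |inner ℝ a (B a)| ≤ t * inner ℝ a (A a) := by
    simpa [re_inner_ofRealVec_toEuclideanCLM_self, im_inner_ofRealVec_toEuclideanCLM_self]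
      using hsec (ofRealVec a)
  have hAb := abs_real_inner_apply_le A a b
  have hBb := (le_abs_self _).trans (abs_real_inner_apply_le B a b)
  have hY : (1 - 2 / p) * (‖a‖ * ‖b‖) ≤ sigmaP p * pWeight p ξ :=
    one_sub_two_div_mul_mul_le_sigmaP_mul hp _ _
  rw [re_inner_Jp_left M hp₀]
  linear_combination htri + 2 * hw + 2 * mul_le_mul_of_nonneg_left hBa he +
    2 * mul_le_mul_of_nonneg_left hAb he +
    2 * mul_le_mul_of_nonneg_left (mul_le_mul_of_nonneg_left hBb he) ht +
    2 * mul_le_mul_of_nonneg_left hY (by positivity : 0 ≤ ‖A‖ + t * ‖B‖)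

end Estimates

theorem stmt15_general {d : ℕ} (M : Matrix (Fin d) (Fin d) ℂ) (m ω p αp : ℝ)
    (hcoer : ∀ ξ : EuclideanSpace ℂ (Fin d),
      m * ‖ξ‖ ^ 2 ≤ (inner ℂ ξ (Matrix.toEuclideanCLM (𝕜 := ℂ) M ξ) : ℂ).re)
    (hω : ω ∈ Set.Ico 0 (Real.pi / 2))
    (hN : ∀ ξ : EuclideanSpace ℂ (Fin d), ‖ξ‖ = 1 →
      (inner ℂ ξ (Matrix.toEuclideanCLM (𝕜 := ℂ) M ξ) : ℂ) ∈ sector ω)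
    (hp : 2 ≤ p)
    (hpos : 0 < m - sigmaP p * ‖Matrix.toEuclideanCLM (𝕜 := ℝ) (M.map Complex.im)‖)
    (hαp : αp ∈ Set.Ico 0 (Real.pi / 2))
    (htan : Real.tan αp =
      (Real.tan ω * m + sigmaP p * ‖Matrix.toEuclideanCLM (𝕜 := ℝ) (M.map Complex.re)‖) /
        (m - sigmaP p * ‖Matrix.toEuclideanCLM (𝕜 := ℝ) (M.map Complex.im)‖)) :
    ∀ ξ : EuclideanSpace ℂ (Fin d), ‖ξ‖ = 1 →
      (inner ℂ (Jp p ξ) (Matrix.toEuclideanCLM (𝕜 := ℂ) M ξ) : ℂ) ∈ sector αp := by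
  intro ξ hξ
  have htω : 0 ≤ Real.tan ω := Real.tan_nonneg_of_nonneg_of_le_pi_div_two hω.1 hω.2.le
  have hsec := fun η => abs_im_le_tan_mul_re_of_mem_sector hω.2
    (inner_map_self_mem_sector (Matrix.toEuclideanCLM (𝕜 := ℂ) M).toLinearMap hN η)
  have hre := le_re_inner_Jp M hp hcoer ξ
  have him := abs_im_inner_Jp_le M hp htω hsec ξ
  have hW := pWeight_pos hp (norm_ne_zero_iff.1 (hξ ▸ one_ne_zero))
  set z := inner ℂ (Jp p ξ) (Matrix.toEuclideanCLM (𝕜 := ℂ) M ξ)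
  set nA := ‖Matrix.toEuclideanCLM (𝕜 := ℝ) (M.map Complex.re)‖
  set nB := ‖Matrix.toEuclideanCLM (𝕜 := ℝ) (M.map Complex.im)‖
  set tω := Real.tan ω
  have hslope : Real.tan αp - tω = sigmaP p * (nA + tω * nB) / (m - sigmaP p * nB) := by
    rw [htan]; field_simp; ring
  have hmono : 0 ≤ Real.tan αp - tω := by
    rw [hslope]
    exact div_nonneg (mul_nonneg (sigmaP_nonneg hp) (by positivity)) hpos.le
  refine mem_sector_of_abs_im_le hαp.1 hαp.2 (lt_of_lt_of_le (by positivity) hre) ?_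
  calc |z.im| ≤ tω * z.re + 2 * (sigmaP p * (nA + tω * nB) * pWeight p ξ) := him
    _ = tω * z.re + (Real.tan αp - tω) * (2 * ((m - sigmaP p * nB) * pWeight p ξ)) := by
      rw [hslope]; field_simp
    _ ≤ tω * z.re + (Real.tan αp - tω) * z.re := by gcongr
    _ = Real.tan αp * z.re := by ring

theorem stmt15 {d : ℕ} (M : Matrix (Fin d) (Fin d) ℂ) (m ω p αp : ℝ)
    (hm : 0 < m)
    (hcoer : ∀ ξ : EuclideanSpace ℂ (Fin d),
      m * ‖ξ‖ ^ 2 ≤ (inner ℂ ξ (Matrix.toEuclideanCLM (𝕜 := ℂ) M ξ) : ℂ).re)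
    (hω : ω ∈ Set.Ico 0 (Real.pi / 2))
    (hN : ∀ ξ : EuclideanSpace ℂ (Fin d), ‖ξ‖ = 1 →
      (inner ℂ ξ (Matrix.toEuclideanCLM (𝕜 := ℂ) M ξ) : ℂ) ∈ sector ω)
    (hp : 2 ≤ p)
    (hpos : 0 < m - sigmaP p * ‖Matrix.toEuclideanCLM (𝕜 := ℝ) (M.map Complex.im)‖)
    (hαp : αp ∈ Set.Ico 0 (Real.pi / 2))
    (htan : Real.tan αp =
      (Real.tan ω * m + sigmaP p * ‖Matrix.toEuclideanCLM (𝕜 := ℝ) (M.map Complex.re)‖) /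
        (m - sigmaP p * ‖Matrix.toEuclideanCLM (𝕜 := ℝ) (M.map Complex.im)‖)) :
    ∀ ξ : EuclideanSpace ℂ (Fin d), ‖ξ‖ = 1 →
      (inner ℂ (Jp p ξ) (Matrix.toEuclideanCLM (𝕜 := ℂ) M ξ) : ℂ) ∈ sector αp :=
  stmt15_general M m ω p αp hcoer hω hN hp hpos hαp htan

end
end

section
/- A matrix M ∈ L(ℂ^d) is p-elliptic for all p ∈ (1,∞) if and only if M has real entries (i.e., Im M = 0) and M is elliptic, in the sense that Δ_p(M) = min_{|ξ|=1} Re(Mξ, J_p(ξ)) > 0 for every p ∈ (1,∞) iff Im M = 0 and Re(Mξ,ξ) > 0 for all nonzero ξ. -/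
/-!
Write `M = R + iS` and `ξ = a + ib` with `R, S, a, b` real. Then
`Re (Mξ, J_p ξ) = (2/p') (a·Ra - a·Sb) + (2/p) (b·Rb + b·Sa)`, and for `p = 2` this is
`Re (Mξ, ξ)`. So `Δ_2(M) > 0` is ellipticity, and letting `p → ∞` (`2/p' → 2`, `2/p → 0`) shows
`a·Ra - a·Sb ≥ 0` for all `a, b`; being affine in `b`, this forces `S = 0`. Conversely, for `S = 0`
the form is `(2/p') a·Ra + (2/p) b·Rb`, positive off `0` by ellipticity at the real vectors `a`
and `b`, and it attains its minimum on the compact unit sphere.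
-/

noncomputable section

open Complex

/-- The p-ellipticity constant `Δ_p(M) = min_{|ξ|=1} Re(Mξ, J_p(ξ))`. -/
def DeltaP {d : ℕ} (p : ℝ) (M : Matrix (Fin d) (Fin d) ℂ) : ℝ :=
  sInf {r : ℝ | ∃ ξ : EuclideanSpace ℂ (Fin d), ‖ξ‖ = 1 ∧
    r = (inner ℂ (Jp p ξ) (Matrix.toEuclideanCLM (𝕜 := ℂ) M ξ) : ℂ).re}

open Matrix

lemma nonneg_of_forall_one_lt_pos {x y : ℝ}
    (h : ∀ p : ℝ, 1 < p → 0 < 2 / (p / (p - 1)) * x + 2 / p * y) : 0 ≤ x := by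
  by_contra! hx
  -- Multiplied by `p / 2` the hypothesis reads `0 < (p - 1) x + y`, which fails for large `p`.
  set p := 1 + (|y| + 1) / -x
  have hp : 1 < p := lt_add_of_pos_right 1 (div_pos (by positivity) (neg_pos.2 hx))
  have hp0 : 0 < p := one_pos.trans hp
  have hscaled : 2 / (p / (p - 1)) * x + 2 / p * y = 2 / p * (-(|y| + 1) + y) := by
    have : (p - 1) * x = -(|y| + 1) := by
      rw [add_sub_cancel_left, div_neg, neg_mul, div_mul_cancel₀ _ hx.ne]
    rw [← this]; field_simp
  have hpos := h p hp
  rw [hscaled] at hpos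
  linarith [mul_neg_of_pos_of_neg (div_pos two_pos hp0) (by linarith [le_abs_self y] :
    -(|y| + 1) + y < 0)]

lemma eq_zero_of_forall_sub_mul_nonneg {c k : ℝ} (h : ∀ s : ℝ, 0 ≤ c - s * k) : k = 0 := by
  by_contra hk
  have := h ((c + 1) / k)
  rw [div_mul_cancel₀ _ hk] at this
  linarith

namespace EuclideanSpace

variable {d : ℕ}

def ofReIm (a b : Fin d → ℝ) : EuclideanSpace ℂ (Fin d) :=
  WithLp.toLp 2 fun i => (a i : ℂ) + I * (b i : ℂ)

@[simp]
lemma ofReIm_apply (a b : Fin d → ℝ) (i : Fin d) : ofReIm a b i = (a i : ℂ) + I * (b i : ℂ) :=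
  rfl

lemma ofReIm_re_im (ξ : EuclideanSpace ℂ (Fin d)) :
    ofReIm (fun i => (ξ i).re) (fun i => (ξ i).im) = ξ := by
  ext i; simp [Complex.ext_iff]

lemma ofReIm_eq_zero_iff {a b : Fin d → ℝ} : ofReIm a b = 0 ↔ a = 0 ∧ b = 0 := by
  simp [PiLp.ext_iff, funext_iff, Complex.ext_iff, forall_and]

lemma smul_ofReIm (t : ℝ) (a b : Fin d → ℝ) : t • ofReIm a b = ofReIm (t • a) (t • b) := by
  ext i; simp [Complex.ext_iff]

end EuclideanSpace

open EuclideanSpace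

section EllipticForm

variable {d : ℕ}

def ellipticForm (p : ℝ) (M : Matrix (Fin d) (Fin d) ℂ) (ξ : EuclideanSpace ℂ (Fin d)) : ℝ :=
  (inner ℂ (Jp p ξ) (Matrix.toEuclideanCLM (𝕜 := ℂ) M ξ) : ℂ).re

lemma Jp_two (ξ : EuclideanSpace ℂ (Fin d)) : Jp 2 ξ = ξ := by
  ext i; simp [Jp, Complex.ext_iff]; norm_num

lemma ellipticForm_two (M : Matrix (Fin d) (Fin d) ℂ) (ξ : EuclideanSpace ℂ (Fin d)) :
    ellipticForm 2 M ξ = (inner ℂ ξ (Matrix.toEuclideanCLM (𝕜 := ℂ) M ξ) : ℂ).re := by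
  rw [ellipticForm, Jp_two]

lemma ellipticForm_ofReIm (p : ℝ) (M : Matrix (Fin d) (Fin d) ℂ) (a b : Fin d → ℝ) :
    ellipticForm p M (ofReIm a b) =
      2 / (p / (p - 1)) * (a ⬝ᵥ M.map re *ᵥ a - a ⬝ᵥ M.map im *ᵥ b) +
        2 / p * (b ⬝ᵥ M.map re *ᵥ b + b ⬝ᵥ M.map im *ᵥ a) := by
  have hM : ∀ i, Matrix.toEuclideanCLM (𝕜 := ℂ) M (ofReIm a b) i = ∑ j, M i j * ofReIm a b j :=
    fun _ => rfl
  simp only [ellipticForm, PiLp.inner_apply, RCLike.inner_apply, hM, re_sum, dotProduct, mulVec,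
    Finset.mul_sum, ← Finset.sum_sub_distrib, ← Finset.sum_add_distrib, Jp, ofReIm_apply, map_apply]
  refine Finset.sum_congr rfl fun i _ => ?_
  simp only [Finset.sum_mul, re_sum]
  refine Finset.sum_congr rfl fun j _ => ?_
  simp only [WithLp.equiv_symm_apply, mul_re, mul_im, conj_re, conj_im, add_re, add_im, I_re, I_im,
    ofReal_re, ofReal_im]
  ring

lemma ellipticForm_smul (p : ℝ) (M : Matrix (Fin d) (Fin d) ℂ) (t : ℝ)
    (ξ : EuclideanSpace ℂ (Fin d)) : ellipticForm p M (t • ξ) = t ^ 2 * ellipticForm p M ξ := by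
  rw [← ofReIm_re_im ξ, smul_ofReIm, ellipticForm_ofReIm, ellipticForm_ofReIm]
  simp only [mulVec_smul, dotProduct_smul, smul_dotProduct, smul_eq_mul]
  ring

lemma continuous_ellipticForm (p : ℝ) (M : Matrix (Fin d) (Fin d) ℂ) :
    Continuous (ellipticForm p M) := by
  unfold ellipticForm Jp
  simp only [WithLp.equiv_symm_apply]
  fun_prop

lemma DeltaP_eq_sInf_image_sphere (p : ℝ) (M : Matrix (Fin d) (Fin d) ℂ) :
    DeltaP p M = sInf (ellipticForm p M '' Metric.sphere 0 1) := by
  simp [DeltaP, ellipticForm, Set.image, eq_comm]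

lemma ellipticForm_pos_of_DeltaP_pos {p : ℝ} {M : Matrix (Fin d) (Fin d) ℂ}
    (h : 0 < DeltaP p M) {ξ : EuclideanSpace ℂ (Fin d)} (hξ : ξ ≠ 0) :
    0 < ellipticForm p M ξ := by
  rw [DeltaP_eq_sInf_image_sphere] at h
  have hbdd : BddBelow (ellipticForm p M '' Metric.sphere 0 1) := by
    by_contra hb
    rw [Real.sInf_of_not_bddBelow hb] at h
    exact h.false
  have hunit : ‖ξ‖⁻¹ • ξ ∈ Metric.sphere (0 : EuclideanSpace ℂ (Fin d)) 1 := by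
    rw [mem_sphere_zero_iff_norm, norm_smul, norm_inv, norm_norm,
      inv_mul_cancel₀ (norm_ne_zero_iff.2 hξ)]
  have hpos := h.trans_le (csInf_le hbdd (Set.mem_image_of_mem _ hunit))
  rw [ellipticForm_smul] at hpos
  exact pos_of_mul_pos_right hpos (sq_nonneg _)

lemma DeltaP_pos_of_forall_sphere {p : ℝ} {M : Matrix (Fin d) (Fin d) ℂ} (hd : 0 < d)
    (h : ∀ ξ : EuclideanSpace ℂ (Fin d), ‖ξ‖ = 1 → 0 < ellipticForm p M ξ) : 0 < DeltaP p M := by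
  have : Nonempty (Fin d) := ⟨⟨0, hd⟩⟩
  have hK := (isCompact_sphere (0 : EuclideanSpace ℂ (Fin d)) 1).image
    (continuous_ellipticForm p M)
  obtain ⟨ξ, hξ, hmin⟩ := hK.sInf_mem ((NormedSpace.sphere_nonempty.2 zero_le_one).image _)
  rw [DeltaP_eq_sInf_image_sphere, ← hmin]
  exact h ξ (mem_sphere_zero_iff_norm.1 hξ)

lemma map_im_eq_zero_of_forall_DeltaP_pos {M : Matrix (Fin d) (Fin d) ℂ}
    (h : ∀ p : ℝ, 1 < p → 0 < DeltaP p M) : M.map im = 0 := by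
  have hA : ∀ a b : Fin d → ℝ, 0 ≤ a ⬝ᵥ M.map re *ᵥ a - a ⬝ᵥ M.map im *ᵥ b := by
    intro a b
    by_cases hab : a = 0 ∧ b = 0
    · simp [hab.1]
    refine nonneg_of_forall_one_lt_pos (y := b ⬝ᵥ M.map re *ᵥ b + b ⬝ᵥ M.map im *ᵥ a)
      fun p hp => ?_
    rw [← ellipticForm_ofReIm]
    exact ellipticForm_pos_of_DeltaP_pos (h p hp) (mt ofReIm_eq_zero_iff.1 hab)
  have hS : ∀ a b : Fin d → ℝ, a ⬝ᵥ M.map im *ᵥ b = 0 := fun a b =>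
    eq_zero_of_forall_sub_mul_nonneg fun s => by
      simpa only [mulVec_smul, dotProduct_smul, smul_eq_mul] using hA a (s • b)
  ext i j
  simpa using hS (Pi.single i 1) (Pi.single j 1)

lemma dotProduct_map_re_mulVec_pos {M : Matrix (Fin d) (Fin d) ℂ}
    (h : ∀ ξ : EuclideanSpace ℂ (Fin d), ξ ≠ 0 → 0 < ellipticForm 2 M ξ) {a : Fin d → ℝ}
    (ha : a ≠ 0) : 0 < a ⬝ᵥ M.map re *ᵥ a := by
  have hpos := h (ofReIm a 0) (by simp [ofReIm_eq_zero_iff, ha])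
  norm_num [ellipticForm_ofReIm] at hpos
  exact hpos

lemma ellipticForm_pos_of_map_im_eq_zero {p : ℝ} {M : Matrix (Fin d) (Fin d) ℂ}
    (hS : M.map im = 0) (hR : ∀ a : Fin d → ℝ, a ≠ 0 → 0 < a ⬝ᵥ M.map re *ᵥ a) (hp : 1 < p)
    {ξ : EuclideanSpace ℂ (Fin d)} (hξ : ξ ≠ 0) : 0 < ellipticForm p M ξ := by
  rw [← ofReIm_re_im ξ] at hξ ⊢
  set a : Fin d → ℝ := fun i => (ξ i).re
  set b : Fin d → ℝ := fun i => (ξ i).im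
  rw [ellipticForm_ofReIm, hS]
  simp only [zero_mulVec, dotProduct_zero, sub_zero, add_zero]
  have hR' : ∀ a : Fin d → ℝ, 0 ≤ a ⬝ᵥ M.map re *ᵥ a := fun a =>
    (eq_or_ne a 0).elim (fun h => by simp [h]) fun h => (hR a h).le
  have hc₁ : 0 < 2 / (p / (p - 1)) := div_pos two_pos (div_pos (by linarith) (by linarith))
  have hc₂ : 0 < 2 / p := div_pos two_pos (by linarith)
  rcases not_and_or.1 (mt ofReIm_eq_zero_iff.2 hξ) with ha | hb
  · exact add_pos_of_pos_of_nonneg (mul_pos hc₁ (hR a ha)) (mul_nonneg hc₂.le (hR' b))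
  · exact add_pos_of_nonneg_of_pos (mul_nonneg hc₁.le (hR' a)) (mul_pos hc₂ (hR b hb))

end EllipticForm

theorem stmt17 {d : ℕ} (hd : 0 < d) (M : Matrix (Fin d) (Fin d) ℂ) :
    (∀ p : ℝ, 1 < p → 0 < DeltaP p M) ↔
      (M.map Complex.im = 0 ∧
        ∀ ξ : EuclideanSpace ℂ (Fin d), ξ ≠ 0 →
          0 < (inner ℂ ξ (Matrix.toEuclideanCLM (𝕜 := ℂ) M ξ) : ℂ).re) := by
  simp only [← ellipticForm_two]
  constructor
  · intro h
    exact ⟨map_im_eq_zero_of_forall_DeltaP_pos h,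
      fun ξ => ellipticForm_pos_of_DeltaP_pos (h 2 one_lt_two)⟩
  · rintro ⟨hS, hell⟩ p hp
    exact DeltaP_pos_of_forall_sphere hd fun ξ hξ =>
      ellipticForm_pos_of_map_im_eq_zero hS (fun a => dotProduct_map_re_mulVec_pos hell) hp
        (norm_ne_zero_iff.1 (hξ ▸ one_ne_zero))

end
end
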